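/- Two first-class constraint sets C₁ and C₂ in a unital C*-algebra F select the same Dirac states if and only if C₁ - C₂ ⊆ D₁ ∩ D₂, where D_i = [F C_i] ∩ [C_i F]. In particular C₁ ∼ C₂ implies D₁ = D₂. -/

import Mathlib

/-!
Both conditions turn out to be equivalent to the equality `[F C₁] = [F C₂]` of the closed left
ideals generated by the constraints; for self-adjoint `C` the closed right ideal `[C F]` is the
adjoint of `[F C]`, so the right ideals then agree as well.

A state `ω` with `C ⊆ N_ω` annihilates all of `[F C]`, by Cauchy–Schwarz. Conversely, let `a` lie
at distance `d > 0` from `[F C]`. For a finite `S ⊆ C` and `ε > 0` put `b = ∑_{c ∈ S} c* c` and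
`v = ε (b + ε)⁻¹`. Then `a - a v ∈ [F C]`, so `‖a v‖ ≥ d`, and compressing by `v` a state that
attains the norm of `v a* a v` gives a state `ψ` with `ψ(a* a) ≥ d²` and `ψ(b)` of order `ε`.
By weak-* compactness of the state space these states accumulate at a state `ω` with `C ⊆ N_ω`
and `ω(a* a) ≥ d²`.
-/

/-- A state on a unital C*-algebra: a normalized positive linear functional. -/
def IsState {F : Type*} [NormedRing F] [StarRing F] [NormedAlgebra ℂ F]
    (ω : F →ₗ[ℂ] ℂ) : Prop :=
  ω 1 = 1 ∧ ∀ a : F, ∃ r : ℝ, 0 ≤ r ∧ ω (star a * a) = (r : ℂ)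

section Basic

variable {F : Type*} [NormedRing F] [StarRing F] [NormedAlgebra ℂ F]

def leftKernel (ω : F →ₗ[ℂ] ℂ) : Set F := {a | ω (star a * a) = 0}

open scoped ComplexOrder in
lemma isState_iff {ω : F →ₗ[ℂ] ℂ} : IsState ω ↔ ω 1 = 1 ∧ ∀ a, 0 ≤ ω (star a * a) := by
  refine and_congr_right fun _ => forall_congr' fun a => ?_
  rw [RCLike.nonneg_iff_exists_ofReal]
  exact exists_congr fun r => and_congr_right fun _ => eq_comm

end Basic

lemma apply_algebraMap_of_map_one {F G : Type*} [NormedRing F] [NormedAlgebra ℂ F] [FunLike G F ℂ]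
    [LinearMapClass G ℂ F ℂ] {f : G} (h1 : f 1 = 1) (r : ℝ) : f (algebraMap ℝ F r) = r := by
  rw [Algebra.algebraMap_eq_smul_one, ← Complex.coe_smul, map_smul, h1, smul_eq_mul, mul_one]

noncomputable def compress {F : Type*} [Ring F] [Algebra ℂ F] (ω : F →ₗ[ℂ] ℂ) (v : F) :
    F →ₗ[ℂ] ℂ :=
  (ω (v * v))⁻¹ • ω ∘ₗ LinearMap.mulLeftRight ℂ (v, v)

@[simp]
lemma compress_apply {F : Type*} [Ring F] [Algebra ℂ F] (ω : F →ₗ[ℂ] ℂ) (v x : F) :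
    compress ω v x = (ω (v * v))⁻¹ * ω (v * x * v) :=
  rfl

section ClosedIdeals

variable {F : Type*} [NormedRing F] [NormedAlgebra ℂ F]

noncomputable def closedLeftIdeal (C : Set F) : Submodule ℂ F :=
  (Submodule.span ℂ {x | ∃ a : F, ∃ c ∈ C, x = a * c}).topologicalClosure

noncomputable def closedRightIdeal (C : Set F) : Submodule ℂ F :=
  (Submodule.span ℂ {x | ∃ a : F, ∃ c ∈ C, x = c * a}).topologicalClosure

variable {C C' : Set F}

lemma subset_closedLeftIdeal : C ⊆ closedLeftIdeal C := fun c hc =>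
  subset_closure (Submodule.subset_span ⟨1, c, hc, (one_mul c).symm⟩)

lemma subset_closedRightIdeal : C ⊆ closedRightIdeal C := fun c hc =>
  subset_closure (Submodule.subset_span ⟨1, c, hc, (mul_one c).symm⟩)

lemma mul_mem_closedLeftIdeal (g : F) {x : F} (hx : x ∈ closedLeftIdeal C) :
    g * x ∈ closedLeftIdeal C := by
  refine map_mem_closure (continuous_const_mul g) hx fun y hy => ?_
  induction hy using Submodule.span_induction with
  | mem y hy =>
    obtain ⟨a, c, hc, rfl⟩ := hy
    exact Submodule.subset_span ⟨g * a, c, hc, (mul_assoc g a c).symm⟩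
  | zero => simp
  | add y z _ _ hy hz => simpa [mul_add] using add_mem hy hz
  | smul r y _ hy => simpa [mul_smul_comm] using Submodule.smul_mem _ r hy

lemma mul_mem_closedRightIdeal (g : F) {x : F} (hx : x ∈ closedRightIdeal C) :
    x * g ∈ closedRightIdeal C := by
  refine map_mem_closure (f := (· * g)) (continuous_mul_const g) hx fun y hy => ?_
  induction hy using Submodule.span_induction with
  | mem y hy =>
    obtain ⟨a, c, hc, rfl⟩ := hy
    exact Submodule.subset_span ⟨a * g, c, hc, mul_assoc c a g⟩
  | zero => simp
  | add y z _ _ hy hz => simpa [add_mul] using add_mem hy hz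
  | smul r y _ hy => simpa [smul_mul_assoc] using Submodule.smul_mem _ r hy

lemma closedLeftIdeal_le (h : C ⊆ closedLeftIdeal C') : closedLeftIdeal C ≤ closedLeftIdeal C' :=
  Submodule.topologicalClosure_minimal _
    (Submodule.span_le.mpr fun _ ⟨a, _, hc, hx⟩ => hx ▸ mul_mem_closedLeftIdeal a (h hc))
    (Submodule.isClosed_topologicalClosure _)

lemma closedRightIdeal_le (h : C ⊆ closedRightIdeal C') :
    closedRightIdeal C ≤ closedRightIdeal C' :=
  Submodule.topologicalClosure_minimal _
    (Submodule.span_le.mpr fun _ ⟨a, _, hc, hx⟩ => hx ▸ mul_mem_closedRightIdeal a (h hc))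
    (Submodule.isClosed_topologicalClosure _)

lemma star_mem_closedRightIdeal [StarRing F] [StarModule ℂ F] [NormedStarGroup F]
    (hC : ∀ c ∈ C, star c ∈ C) {x : F} (hx : x ∈ closedLeftIdeal C) :
    star x ∈ closedRightIdeal C := by
  refine map_mem_closure continuous_star hx fun y hy => ?_
  induction hy using Submodule.span_induction with
  | mem y hy =>
    obtain ⟨a, c, hc, rfl⟩ := hy
    exact Submodule.subset_span ⟨star a, star c, hC c hc, star_mul a c⟩
  | zero => simp
  | add y z _ _ hy hz => simpa using add_mem hy hz
  | smul r y _ hy => simpa using Submodule.smul_mem _ (star r) hy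

variable [StarRing F] [StarModule ℂ F] [NormedStarGroup F] {C₁ C₂ : Set F}

lemma closedRightIdeal_eq_of_closedLeftIdeal_eq (hC₁ : ∀ c ∈ C₁, star c ∈ C₁)
    (hC₂ : ∀ c ∈ C₂, star c ∈ C₂) (h : closedLeftIdeal C₁ = closedLeftIdeal C₂) :
    closedRightIdeal C₁ = closedRightIdeal C₂ :=
  le_antisymm
    (closedRightIdeal_le fun c hc => star_star c ▸
      star_mem_closedRightIdeal hC₂ (h ▸ subset_closedLeftIdeal (hC₁ c hc)))
    (closedRightIdeal_le fun c hc => star_star c ▸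
      star_mem_closedRightIdeal hC₁ (h ▸ subset_closedLeftIdeal (hC₂ c hc)))

theorem closedLeftIdeal_eq_iff_forall_sub_mem (hC₁ : ∀ c ∈ C₁, star c ∈ C₁)
    (hC₂ : ∀ c ∈ C₂, star c ∈ C₂) (hne₁ : C₁.Nonempty) (hne₂ : C₂.Nonempty) :
    closedLeftIdeal C₁ = closedLeftIdeal C₂ ↔ ∀ c₁ ∈ C₁, ∀ c₂ ∈ C₂, c₁ - c₂ ∈
      closedLeftIdeal C₁ ⊓ closedRightIdeal C₁ ⊓ (closedLeftIdeal C₂ ⊓ closedRightIdeal C₂) := by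
  constructor
  · intro hL c₁ hc₁ c₂ hc₂
    have hD : closedLeftIdeal C₁ ⊓ closedRightIdeal C₁ =
        closedLeftIdeal C₂ ⊓ closedRightIdeal C₂ := by
      rw [hL, closedRightIdeal_eq_of_closedLeftIdeal_eq hC₁ hC₂ hL]
    have h₁ : c₁ ∈ closedLeftIdeal C₁ ⊓ closedRightIdeal C₁ :=
      ⟨subset_closedLeftIdeal hc₁, subset_closedRightIdeal hc₁⟩
    have h₂ : c₂ ∈ closedLeftIdeal C₂ ⊓ closedRightIdeal C₂ :=
      ⟨subset_closedLeftIdeal hc₂, subset_closedRightIdeal hc₂⟩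
    rw [← hD] at h₂ ⊢
    exact ⟨sub_mem h₁ h₂, sub_mem h₁ h₂⟩
  · intro h
    obtain ⟨c₁, hc₁⟩ := hne₁
    obtain ⟨c₂, hc₂⟩ := hne₂
    refine le_antisymm (closedLeftIdeal_le fun c hc => ?_) (closedLeftIdeal_le fun c hc => ?_)
    · simpa using add_mem (h c hc c₂ hc₂).2.1 (subset_closedLeftIdeal hc₂)
    · simpa using sub_mem (subset_closedLeftIdeal hc₁) (h c₁ hc₁ c hc).1.1

end ClosedIdeals

section States

open scoped ComplexOrder

variable {F : Type*} [CStarAlgebra F] [PartialOrder F] [StarOrderedRing F] {ω : F →ₗ[ℂ] ℂ}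

lemma IsState.map_nonneg (hω : IsState ω) {x : F} (hx : 0 ≤ x) : 0 ≤ ω x := by
  obtain ⟨y, rfl⟩ := CStarAlgebra.nonneg_iff_eq_star_mul_self.mp hx
  exact (isState_iff.mp hω).2 y

noncomputable def IsState.toPositiveLinearMap (hω : IsState ω) : F →ₚ[ℂ] ℂ :=
  .mk₀ ω fun _ => hω.map_nonneg

@[simp]
lemma IsState.toPositiveLinearMap_apply (hω : IsState ω) (x : F) :
    hω.toPositiveLinearMap x = ω x :=
  rfl

lemma IsState.mono (hω : IsState ω) {x y : F} (h : x ≤ y) : ω x ≤ ω y :=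
  hω.toPositiveLinearMap.monotone' h

lemma IsState.continuous (hω : IsState ω) : Continuous ω :=
  map_continuous hω.toPositiveLinearMap

lemma IsState.apply_le_norm (hω : IsState ω) {x : F} (hx : IsSelfAdjoint x) : ω x ≤ ‖x‖ :=
  apply_algebraMap_of_map_one hω.1 ‖x‖ ▸ hω.mono hx.le_algebraMap_norm_self

lemma IsState.norm_apply_le (hω : IsState ω) (x : F) : ‖ω x‖ ≤ 4 * ‖x‖ := by
  obtain ⟨y, hy, hyx, hx⟩ := CStarAlgebra.exists_sum_four_nonneg x
  have hy' (i : Fin 4) : ‖ω (y i)‖ ≤ ‖x‖ := by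
    simpa [hω.1] using (hω.toPositiveLinearMap.norm_apply_le_of_nonneg (y i) (hy i)).trans
      (mul_le_mul_of_nonneg_left (hyx i) (norm_nonneg _))
  calc ‖ω x‖ ≤ ∑ i : Fin 4, ‖ω (y i)‖ := by
        nth_rewrite 1 [hx]
        simp only [map_sum, map_smul, smul_eq_mul]
        refine (norm_sum_le _ _).trans_eq ?_
        simp
    _ ≤ ∑ _i : Fin 4, ‖x‖ := Finset.sum_le_sum fun i _ => hy' i
    _ = 4 * ‖x‖ := by simp

lemma IsState.apply_mul_eq_zero (hω : IsState ω) {c : F} (hc : ω (star c * c) = 0) (b : F) :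
    ω (b * c) = 0 := by
  set f := hω.toPositiveLinearMap
  have hnorm : ‖f.toPreGNS c‖ = 0 := by
    have : (‖f.toPreGNS c‖ : ℂ) ^ 2 = 0 := (f.preGNS_norm_sq _).trans hc
    exact_mod_cast pow_eq_zero_iff two_ne_zero |>.mp this
  have := norm_inner_le_norm (𝕜 := ℂ) (f.toPreGNS (star b)) (f.toPreGNS c)
  rw [hnorm, mul_zero, norm_le_zero_iff, f.preGNS_inner_def] at this
  exact (by simpa using this : f (b * c) = 0)

lemma IsState.closedLeftIdeal_subset_leftKernel (hω : IsState ω) {C : Set F}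
    (hC : C ⊆ leftKernel ω) : (closedLeftIdeal C : Set F) ⊆ leftKernel ω := by
  let K : Submodule ℂ F := ⨅ g : F, LinearMap.ker (ω ∘ₗ LinearMap.mulLeft ℂ g)
  have hK : (K : Set F) = ⋂ g : F, {x | ω (g * x) = 0} := by ext; simp [K]
  have hCK : closedLeftIdeal C ≤ K := by
    refine Submodule.topologicalClosure_minimal _ (Submodule.span_le.mpr ?_) ?_
    · rintro _ ⟨a, c, hc, rfl⟩
      simpa [hK, ← mul_assoc] using fun g => hω.apply_mul_eq_zero (hC hc) (g * a)
    · rw [hK]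
      exact isClosed_iInter fun g => isClosed_eq (hω.continuous.comp (continuous_const_mul g))
        continuous_const
  intro x hx
  show ω (star x * x) = 0
  simpa using (Submodule.mem_iInf _).mp (hCK hx) (star x)

lemma isCompact_setOf_isState : IsCompact {φ : WeakDual ℂ F | IsState (φ : F →ₗ[ℂ] ℂ)} := by
  have hclosed : IsClosed {φ : WeakDual ℂ F | IsState (φ : F →ₗ[ℂ] ℂ)} := by
    simp only [isState_iff, Set.ofPred_and, Set.ofPred_forall]
    exact (isClosed_eq (WeakDual.eval_continuous 1) continuous_const).inter
      (isClosed_iInter fun a => isClosed_le continuous_const (WeakDual.eval_continuous _))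
  refine (WeakDual.isCompact_closedBall 0 4).of_isClosed_subset hclosed fun φ hφ => ?_
  simpa using (WeakDual.toStrongDual φ).opNorm_le_bound (by norm_num) hφ.norm_apply_le

end States

section NormOneFunctionals

variable {F : Type*} [CStarAlgebra F] [Nontrivial F]

lemma norm_add_I_smul_one_sq_le {h : F} (hh : IsSelfAdjoint h) (s : ℝ) :
    ‖h + (s * Complex.I) • (1 : F)‖ ^ 2 ≤ ‖h‖ ^ 2 + s ^ 2 := by
  have hsq : star (h + (s * Complex.I) • (1 : F)) * (h + (s * Complex.I) • 1)
      = h * h + ((s ^ 2 : ℝ) : ℂ) • 1 := by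
    have hI : star ((s : ℂ) * Complex.I) = -(s * Complex.I) := by simp
    have hI2 : -((s : ℂ) * Complex.I * (s * Complex.I)) = ((s ^ 2 : ℝ) : ℂ) := by
      push_cast; ring_nf; simp [Complex.I_sq]
    rw [star_add, star_smul, hI, hh.star_eq, star_one, ← hI2]
    simp only [add_mul, mul_add, neg_mul, smul_mul_assoc, one_mul, mul_smul_one, smul_add, smul_neg,
      neg_smul, smul_smul]
    abel
  rw [sq, ← CStarRing.norm_star_mul_self, hsq]
  refine (norm_add_le _ _).trans ?_
  rw [norm_smul, norm_one, mul_one, Complex.norm_real, Real.norm_of_nonneg (sq_nonneg s), sq]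
  gcongr
  exact (norm_mul_le h h).trans_eq (sq _).symm

lemma im_apply_eq_zero_of_norm_le_one {f : StrongDual ℂ F} (hf : ‖f‖ ≤ 1) (h1 : f 1 = 1)
    {h : F} (hh : IsSelfAdjoint h) : (f h).im = 0 := by
  have key (s : ℝ) : (f h).re ^ 2 + (f h).im ^ 2 + 2 * (f h).im * s ≤ ‖h‖ ^ 2 := by
    have hle : ‖f (h + (s * Complex.I) • 1)‖ ≤ ‖h + (s * Complex.I) • (1 : F)‖ :=
      (f.le_opNorm _).trans (mul_le_of_le_one_left (norm_nonneg _) hf)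
    have hval : f (h + (s * Complex.I) • 1) = f h + s * Complex.I := by simp [h1]
    rw [hval] at hle
    have := (pow_le_pow_left₀ (norm_nonneg _) hle 2).trans (norm_add_I_smul_one_sq_le hh s)
    rw [← Complex.normSq_eq_norm_sq, Complex.normSq_apply] at this
    simp only [Complex.add_re, Complex.mul_re, Complex.ofReal_re, Complex.I_re, mul_zero,
      Complex.ofReal_im, Complex.I_im, mul_one, sub_self, add_zero, Complex.add_im,
      Complex.mul_im] at this
    nlinarith
  by_contra him
  have hs : 2 * (f h).im * ((‖h‖ ^ 2 + 1) / (2 * (f h).im)) = ‖h‖ ^ 2 + 1 := by field_simp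
  nlinarith [key ((‖h‖ ^ 2 + 1) / (2 * (f h).im)), sq_nonneg (f h).re, sq_nonneg (f h).im]

open scoped ComplexOrder in
lemma isState_of_norm_le_one [PartialOrder F] [StarOrderedRing F] {f : StrongDual ℂ F}
    (hf : ‖f‖ ≤ 1) (h1 : f 1 = 1) : IsState (f : F →ₗ[ℂ] ℂ) := by
  refine isState_iff.mpr ⟨h1, fun a => ?_⟩
  have hz : 0 ≤ star a * a := star_mul_self_nonneg a
  set z := star a * a
  have hgap : ‖algebraMap ℝ F ‖z‖ - z‖ ≤ ‖z‖ := by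
    simpa [norm_algebraMap'] using CStarAlgebra.norm_le_norm_of_nonneg_of_le
      (sub_nonneg.mpr (IsSelfAdjoint.of_nonneg hz).le_algebraMap_norm_self) (sub_le_self _ hz)
  have hfgap : ‖(‖z‖ : ℂ) - f z‖ ≤ ‖z‖ := by
    rw [← apply_algebraMap_of_map_one h1, ← map_sub]
    exact (f.le_opNorm _).trans (mul_le_of_le_one_left (norm_nonneg _) hf) |>.trans hgap
  have hre := (Complex.abs_re_le_norm _).trans hfgap
  rw [Complex.sub_re, Complex.ofReal_re, abs_le] at hre
  change 0 ≤ f z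
  exact Complex.nonneg_iff.mpr
    ⟨by linarith, (im_apply_eq_zero_of_norm_le_one hf h1 (.of_nonneg hz)).symm⟩

lemma exists_isState_apply_eq_norm [PartialOrder F] [StarOrderedRing F] {q : F} (hq : 0 ≤ q) :
    ∃ ω : F →ₗ[ℂ] ℂ, IsState ω ∧ ω q = ‖q‖ := by
  let A := StarAlgebra.elemental ℂ q
  have hqA : q ∈ A := StarAlgebra.elemental.self_mem ℂ q
  have : IsStarNormal q := (IsSelfAdjoint.of_nonneg hq).isStarNormal
  have : IsClosed (A : Set F) := StarAlgebra.elemental.isClosed ℂ q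
  obtain ⟨φ, hφ⟩ : ∃ φ : WeakDual.characterSpace ℂ A, φ ⟨q, hqA⟩ = ‖q‖ := by
    apply WeakDual.CharacterSpace.mem_spectrum_iff_exists.mp
    rw [StarSubalgebra.spectrum_eq]
    simpa using spectrum.algebraMap_mem ℂ (CStarAlgebra.norm_mem_spectrum_of_nonneg hq)
  obtain ⟨f, hfφ, hfn⟩ := exists_extension_norm_eq (Subalgebra.toSubmodule A.toSubalgebra)
    (WeakDual.toStrongDual (φ : WeakDual ℂ A))
  refine ⟨f, isState_of_norm_le_one ?_ ?_, ?_⟩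
  · rw [hfn]
    exact (WeakDual.CharacterSpace.norm_le_norm_one φ).trans_eq norm_one
  · exact (hfφ ⟨1, one_mem A⟩).trans (map_one φ)
  · simpa [hφ] using hfφ ⟨q, hqA⟩

end NormOneFunctionals

section AlmostDiracStates

open scoped ComplexOrder

variable {F : Type*} [CStarAlgebra F] [PartialOrder F] [StarOrderedRing F]

lemma exists_cutoff {b : F} (hb : 0 ≤ b) {ε : ℝ} (hε : 0 < ε) :
    ∃ v w : F, IsSelfAdjoint v ∧ v * v ≤ 1 ∧ 1 - v = w * b ∧ ‖v * b * v‖ ≤ ε := by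
  have hspec : ∀ t ∈ spectrum ℝ b, 0 ≤ t := fun t ht => spectrum_nonneg_of_nonneg hb ht
  have hg : ContinuousOn (fun t : ℝ => (t + ε)⁻¹) (spectrum ℝ b) :=
    ContinuousOn.inv₀ (by fun_prop) fun t ht => by linarith [hspec t ht]
  have hf : ContinuousOn (fun t : ℝ => ε * (t + ε)⁻¹) (spectrum ℝ b) := continuousOn_const.mul hg
  set v := cfc (fun t : ℝ => ε * (t + ε)⁻¹) b
  set w := cfc (fun t : ℝ => (t + ε)⁻¹) b
  have hvv : v * v = cfc (fun t : ℝ => ε * (t + ε)⁻¹ * (ε * (t + ε)⁻¹)) b := by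
    rw [cfc_mul (fun t : ℝ => ε * (t + ε)⁻¹) (fun t : ℝ => ε * (t + ε)⁻¹) b hf hf]
  have hwb : w * b = cfc (fun t : ℝ => (t + ε)⁻¹ * t) b := by
    rw [cfc_mul (fun t : ℝ => (t + ε)⁻¹) (fun t : ℝ => t) b hg, cfc_id' ℝ b]
  have hvbv : v * b * v = cfc (fun t : ℝ => ε * (t + ε)⁻¹ * t * (ε * (t + ε)⁻¹)) b := by
    rw [cfc_mul (fun t : ℝ => ε * (t + ε)⁻¹ * t) (fun t : ℝ => ε * (t + ε)⁻¹) b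
      (hf.mul continuousOn_id) hf, cfc_mul (fun t : ℝ => ε * (t + ε)⁻¹) (fun t : ℝ => t) b hf,
      cfc_id' ℝ b]
  refine ⟨v, w, cfc_predicate _ _, ?_, ?_, ?_⟩
  · rw [hvv]
    refine cfc_le_one _ _ fun t ht => ?_
    have := hspec t ht
    rw [← div_eq_mul_inv, ← sq, div_pow, div_le_one (by positivity)]
    nlinarith
  · rw [hwb, ← cfc_const_one ℝ b, ← cfc_sub _ _ b continuousOn_const hf]
    refine cfc_congr fun t ht => ?_
    have := hspec t ht
    field_simp
    ring
  · rw [hvbv]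
    refine norm_cfc_le hε.le fun t ht => ?_
    have := hspec t ht
    rw [Real.norm_of_nonneg (by positivity),
      show ε * (t + ε)⁻¹ * t * (ε * (t + ε)⁻¹) = ε * (ε * t / (t + ε) ^ 2) by field_simp]
    exact mul_le_of_le_one_right hε.le ((div_le_one (by positivity)).mpr (by nlinarith))

lemma IsState.compress {ω : F →ₗ[ℂ] ℂ} (hω : IsState ω) {v : F} (hv : IsSelfAdjoint v)
    (hvv : ω (v * v) ≠ 0) : IsState (compress ω v) := by
  have hsand (a : F) : v * (star a * a) * v = star (a * v) * (a * v) := by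
    rw [star_mul, hv.star_eq]; noncomm_ring
  refine isState_iff.mpr ⟨by simp [hvv], fun a => ?_⟩
  rw [compress_apply, hsand]
  have hvv₀ : 0 ≤ ω (v * v) := by simpa [hv.star_eq] using hω.map_nonneg (star_mul_self_nonneg v)
  exact mul_nonneg (inv_nonneg.mpr hvv₀) (hω.map_nonneg (star_mul_self_nonneg _))

lemma exists_isState_of_le_norm_mul [Nontrivial F] {a v : F} {d : ℝ} (hd : 0 < d)
    (hv : IsSelfAdjoint v) (hvv : v * v ≤ 1) (hav : d ≤ ‖a * v‖) :
    ∃ ψ : F →ₗ[ℂ] ℂ, IsState ψ ∧ ((d ^ 2 : ℝ) : ℂ) ≤ ψ (star a * a) ∧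
      ∀ x, IsSelfAdjoint x → ψ x ≤ ((‖a‖ ^ 2 / d ^ 2 * ‖v * x * v‖ : ℝ) : ℂ) := by
  have hqv : star (a * v) * (a * v) = v * (star a * a) * v := by
    rw [star_mul, hv.star_eq]; noncomm_ring
  obtain ⟨f, hf, hfq⟩ := exists_isState_apply_eq_norm (star_mul_self_nonneg (a * v))
  have hδ0 : 0 ≤ f (v * v) := by simpa [hv.star_eq] using (isState_iff.mp hf).2 v
  set δ := (f (v * v)).re
  have hδ : f (v * v) = δ := Complex.eq_re_of_ofReal_le (r := 0) (by simpa using hδ0)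
  have hδ1 : δ ≤ 1 := by
    have := hf.mono hvv
    rwa [hδ, hf.1, ← Complex.ofReal_one, Complex.real_le_real] at this
  have hqδ : ‖a * v‖ ^ 2 ≤ ‖a‖ ^ 2 * δ := by
    have hle := star_left_conjugate_le_conjugate
      (CStarAlgebra.star_mul_le_algebraMap_norm_sq (a := a)) v
    rw [hv.star_eq, ← hqv, mul_assoc, ← Algebra.smul_def, mul_smul_comm] at hle
    have := hf.mono hle
    rwa [hfq, ← Complex.coe_smul, map_smul, hδ, CStarRing.norm_star_mul_self, ← sq, smul_eq_mul,
      ← Complex.ofReal_mul, Complex.real_le_real] at this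
  have hd2 : d ^ 2 ≤ ‖a * v‖ ^ 2 := pow_le_pow_left₀ hd.le hav 2
  have hδpos : 0 < δ := by nlinarith
  have hδinv : δ⁻¹ ≤ ‖a‖ ^ 2 / d ^ 2 := by
    rw [le_div_iff₀ (by positivity), inv_mul_le_iff₀ hδpos]
    linarith
  refine ⟨compress f v, hf.compress hv (by rw [hδ]; exact_mod_cast hδpos.ne'), ?_, fun x hx => ?_⟩
  · rw [compress_apply, hδ, ← hqv, hfq, CStarRing.norm_star_mul_self, ← sq, ← Complex.ofReal_inv,
      ← Complex.ofReal_mul, Complex.real_le_real]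
    exact hd2.trans (le_mul_of_one_le_left (by positivity) ((one_le_inv₀ hδpos).mpr hδ1))
  · have hsa : IsSelfAdjoint (v * x * v) := by simpa [hv.star_eq] using hx.conjugate v
    rw [compress_apply, hδ]
    refine (mul_le_mul_of_nonneg_left (hf.apply_le_norm hsa)
      (inv_nonneg.mpr (Complex.zero_le_real.mpr hδpos.le))).trans ?_
    rw [← Complex.ofReal_inv, ← Complex.ofReal_mul, Complex.real_le_real]
    exact mul_le_mul_of_nonneg_right hδinv (norm_nonneg _)

lemma exists_isState_le_of_forall_le_norm_sub [Nontrivial F] {J : Submodule ℂ F} {a b : F}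
    {d η : ℝ} (hd : 0 < d) (hη : 0 < η) (hdist : ∀ x ∈ J, d ≤ ‖a - x‖) (hb : 0 ≤ b)
    (hbJ : ∀ g, g * b ∈ J) :
    ∃ ψ : F →ₗ[ℂ] ℂ, IsState ψ ∧ ((d ^ 2 : ℝ) : ℂ) ≤ ψ (star a * a) ∧ ψ b ≤ η := by
  have ha : 0 < ‖a‖ := hd.trans_le (by simpa using hdist 0 J.zero_mem)
  obtain ⟨v, w, hv, hvv, hvw, hvbv⟩ := exists_cutoff hb (ε := η * d ^ 2 / ‖a‖ ^ 2) (by positivity)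
  have hav : d ≤ ‖a * v‖ := by
    have : a - a * w * b = a * v := by rw [mul_assoc, ← hvw, mul_sub, mul_one, sub_sub_cancel]
    exact this ▸ hdist _ (hbJ (a * w))
  obtain ⟨ψ, hψ, hψa, hψx⟩ := exists_isState_of_le_norm_mul hd hv hvv hav
  refine ⟨ψ, hψ, hψa, (hψx b (.of_nonneg hb)).trans (Complex.real_le_real.mpr ?_)⟩
  calc ‖a‖ ^ 2 / d ^ 2 * ‖v * b * v‖ ≤ ‖a‖ ^ 2 / d ^ 2 * (η * d ^ 2 / ‖a‖ ^ 2) := by gcongr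
    _ = η := by field_simp

end AlmostDiracStates

section DiracStates

open scoped ComplexOrder

variable {F : Type*} [CStarAlgebra F] [PartialOrder F] [StarOrderedRing F]

lemma exists_isState_forall_mem_le [Nontrivial F] {C : Set F} {a : F} {d η : ℝ} (hd : 0 < d)
    (hη : 0 < η) (hdist : ∀ x ∈ closedLeftIdeal C, d ≤ ‖a - x‖) (S : Finset C) :
    ∃ ψ : F →ₗ[ℂ] ℂ, IsState ψ ∧ ((d ^ 2 : ℝ) : ℂ) ≤ ψ (star a * a) ∧
      ∀ c ∈ S, ψ (star (c : F) * c) ≤ η := by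
  have hS : ∀ g, g * ∑ c ∈ S, star (c : F) * c ∈ closedLeftIdeal C := fun g => by
    rw [Finset.mul_sum]
    refine Submodule.sum_mem _ fun c _ => ?_
    rw [← mul_assoc]
    exact mul_mem_closedLeftIdeal _ (subset_closedLeftIdeal c.2)
  obtain ⟨ψ, hψ, hψa, hψS⟩ := exists_isState_le_of_forall_le_norm_sub hd hη hdist
    (Finset.sum_nonneg fun (c : C) _ => star_mul_self_nonneg (c : F)) hS
  refine ⟨ψ, hψ, hψa, fun c hc => (hψ.mono ?_).trans hψS⟩
  exact Finset.single_le_sum (f := fun c : C => star (c : F) * c)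
    (fun c _ => star_mul_self_nonneg _) hc

theorem mem_closedLeftIdeal_of_forall_isState {C : Set F} {a : F}
    (h : ∀ ω : F →ₗ[ℂ] ℂ, IsState ω → C ⊆ leftKernel ω → a ∈ leftKernel ω) :
    a ∈ closedLeftIdeal C := by
  by_contra ha
  have : Nontrivial F := nontrivial_of_ne a 0 fun h0 => ha (h0 ▸ zero_mem _)
  have hd : 0 < Metric.infDist a (closedLeftIdeal C) :=
    ((Submodule.isClosed_topologicalClosure _).notMem_iff_infDist_pos ⟨0, zero_mem _⟩).mp ha
  set d := Metric.infDist a (closedLeftIdeal C)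
  have hdist : ∀ x ∈ closedLeftIdeal C, d ≤ ‖a - x‖ := fun x hx =>
    (Metric.infDist_le_dist_of_mem hx).trans_eq (dist_eq_norm a x)
  let s := {φ : WeakDual ℂ F | IsState (φ : F →ₗ[ℂ] ℂ) ∧ ((d ^ 2 : ℝ) : ℂ) ≤ φ (star a * a)}
  have hs : IsCompact s :=
    isCompact_setOf_isState.inter_right (isClosed_le continuous_const (WeakDual.eval_continuous _))
  let t : ℕ × C → Set (WeakDual ℂ F) := fun p =>
    {φ | φ (star (p.2 : F) * p.2) ≤ ((1 / ((p.1 : ℝ) + 1) : ℝ) : ℂ)}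
  obtain ⟨ψ, ⟨hψ, hψa⟩, hψt⟩ := hs.inter_iInter_nonempty t
    (fun p => isClosed_le (WeakDual.eval_continuous _) continuous_const) fun u => by
      classical
      obtain ⟨ψ, hψ, hψa, hψu⟩ := exists_isState_forall_mem_le hd
        (η := 1 / (((u.sup Prod.fst : ℕ) : ℝ) + 1)) (by positivity) hdist (u.image Prod.snd)
      refine ⟨StrongDual.toWeakDual ⟨ψ, hψ.continuous⟩, ⟨hψ, hψa⟩,
        Set.mem_iInter₂.mpr fun p hp => (hψu p.2 (Finset.mem_image_of_mem _ hp)).trans ?_⟩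
      exact Complex.real_le_real.mpr (one_div_le_one_div_of_le (by positivity)
        (by gcongr; exact_mod_cast Finset.le_sup (f := Prod.fst) hp))
  have hψC : C ⊆ leftKernel ψ := fun c hc => by
    have hlim :
        Filter.Tendsto (fun n : ℕ => ((1 / ((n : ℝ) + 1) : ℝ) : ℂ)) Filter.atTop (nhds 0) := by
      have := (Complex.continuous_ofReal.tendsto 0).comp tendsto_one_div_add_atTop_nhds_zero_nat
      rwa [Complex.ofReal_zero] at this
    exact le_antisymm (ge_of_tendsto' hlim fun n => Set.mem_iInter.mp hψt (n, ⟨c, hc⟩))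
      ((isState_iff.mp hψ).2 c)
  rw [show ψ (star a * a) = 0 from h ψ hψ hψC, ← Complex.ofReal_zero, Complex.real_le_real] at hψa
  exact absurd hψa (not_le.mpr (by positivity))

theorem closedLeftIdeal_le_iff_forall_isState {C₁ C₂ : Set F} :
    closedLeftIdeal C₂ ≤ closedLeftIdeal C₁ ↔
      ∀ ω : F →ₗ[ℂ] ℂ, IsState ω → C₁ ⊆ leftKernel ω → C₂ ⊆ leftKernel ω :=
  ⟨fun h _ hω hC₁ =>
    (subset_closedLeftIdeal.trans h).trans (hω.closedLeftIdeal_subset_leftKernel hC₁),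
    fun h => closedLeftIdeal_le fun _ hc =>
      mem_closedLeftIdeal_of_forall_isState fun ω hω hC₁ => h ω hω hC₁ hc⟩

theorem closedLeftIdeal_eq_iff_forall_isState {C₁ C₂ : Set F} :
    closedLeftIdeal C₁ = closedLeftIdeal C₂ ↔
      ∀ ω : F →ₗ[ℂ] ℂ, IsState ω → (C₁ ⊆ leftKernel ω ↔ C₂ ⊆ leftKernel ω) := by
  rw [le_antisymm_iff, closedLeftIdeal_le_iff_forall_isState, closedLeftIdeal_le_iff_forall_isState]
  exact ⟨fun h ω hω => ⟨h.2 ω hω, h.1 ω hω⟩,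
    fun h => ⟨fun ω hω => (h ω hω).2, fun ω hω => (h ω hω).1⟩⟩

end DiracStates

theorem stmt_10_general {F : Type*} [NormedRing F] [StarRing F] [CStarRing F]
    [NormedAlgebra ℂ F] [StarModule ℂ F] [CompleteSpace F]
    (C₁ C₂ : Set F) (hC₁ : ∀ c ∈ C₁, star c ∈ C₁) (hC₂ : ∀ c ∈ C₂, star c ∈ C₂)
    (hne₁ : C₁.Nonempty) (hne₂ : C₂.Nonempty) :
    let Nker : (F →ₗ[ℂ] ℂ) → Set F := fun ω => {a : F | ω (star a * a) = 0}
    let D₁ : Set F :=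
      closure ((Submodule.span ℂ {x : F | ∃ a : F, ∃ c ∈ C₁, x = a * c} : Submodule ℂ F) : Set F) ∩
      closure ((Submodule.span ℂ {x : F | ∃ a : F, ∃ c ∈ C₁, x = c * a} : Submodule ℂ F) : Set F)
    let D₂ : Set F :=
      closure ((Submodule.span ℂ {x : F | ∃ a : F, ∃ c ∈ C₂, x = a * c} : Submodule ℂ F) : Set F) ∩
      closure ((Submodule.span ℂ {x : F | ∃ a : F, ∃ c ∈ C₂, x = c * a} : Submodule ℂ F) : Set F)
    ((∀ ω : F →ₗ[ℂ] ℂ, IsState ω → (C₁ ⊆ Nker ω ↔ C₂ ⊆ Nker ω)) ↔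
      (∀ c₁ ∈ C₁, ∀ c₂ ∈ C₂, c₁ - c₂ ∈ D₁ ∩ D₂)) ∧
    ((∀ ω : F →ₗ[ℂ] ℂ, IsState ω → (C₁ ⊆ Nker ω ↔ C₂ ⊆ Nker ω)) → D₁ = D₂) := by
  let _ : CStarAlgebra F := {}
  let _ := CStarAlgebra.spectralOrder F
  let _ := CStarAlgebra.spectralOrderedRing F
  have hL := closedLeftIdeal_eq_iff_forall_isState (C₁ := C₁) (C₂ := C₂)
  refine ⟨hL.symm.trans (closedLeftIdeal_eq_iff_forall_sub_mem hC₁ hC₂ hne₁ hne₂), fun h => ?_⟩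
  have hL₁₂ := hL.mpr h
  show ((closedLeftIdeal C₁ ⊓ closedRightIdeal C₁ : Submodule ℂ F) : Set F) =
    (closedLeftIdeal C₂ ⊓ closedRightIdeal C₂ : Submodule ℂ F)
  rw [hL₁₂, closedRightIdeal_eq_of_closedLeftIdeal_eq hC₁ hC₂ hL₁₂]

/-- Two (nonempty) first-class self-adjoint constraint sets `C₁, C₂` in a unital
C*-algebra `F` select the same Dirac states iff `C₁ - C₂ ⊆ D₁ ∩ D₂`, where
`D_i = [F C_i] ∩ [C_i F]`.  In particular equivalence implies `D₁ = D₂`. -/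
theorem stmt_10 {F : Type*} [NormedRing F] [StarRing F] [CStarRing F]
    [NormedAlgebra ℂ F] [StarModule ℂ F] [CompleteSpace F]
    (C₁ C₂ : Set F) (hC₁ : ∀ c ∈ C₁, star c ∈ C₁) (hC₂ : ∀ c ∈ C₂, star c ∈ C₂)
    (hne₁ : C₁.Nonempty) (hne₂ : C₂.Nonempty)
    (hfc₁ : ∃ ω : F →ₗ[ℂ] ℂ, IsState ω ∧ ∀ c ∈ C₁, ω (star c * c) = 0)
    (hfc₂ : ∃ ω : F →ₗ[ℂ] ℂ, IsState ω ∧ ∀ c ∈ C₂, ω (star c * c) = 0) :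
    let Nker : (F →ₗ[ℂ] ℂ) → Set F := fun ω => {a : F | ω (star a * a) = 0}
    let D₁ : Set F :=
      closure ((Submodule.span ℂ {x : F | ∃ a : F, ∃ c ∈ C₁, x = a * c} : Submodule ℂ F) : Set F) ∩
      closure ((Submodule.span ℂ {x : F | ∃ a : F, ∃ c ∈ C₁, x = c * a} : Submodule ℂ F) : Set F)
    let D₂ : Set F :=
      closure ((Submodule.span ℂ {x : F | ∃ a : F, ∃ c ∈ C₂, x = a * c} : Submodule ℂ F) : Set F) ∩
      closure ((Submodule.span ℂ {x : F | ∃ a : F, ∃ c ∈ C₂, x = c * a} : Submodule ℂ F) : Set F)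
    ((∀ ω : F →ₗ[ℂ] ℂ, IsState ω → (C₁ ⊆ Nker ω ↔ C₂ ⊆ Nker ω)) ↔
      (∀ c₁ ∈ C₁, ∀ c₂ ∈ C₂, c₁ - c₂ ∈ D₁ ∩ D₂)) ∧
    ((∀ ω : F →ₗ[ℂ] ℂ, IsState ω → (C₁ ⊆ Nker ω ↔ C₂ ⊆ Nker ω)) → D₁ = D₂) :=
  stmt_10_general C₁ C₂ hC₁ hC₂ hne₁ hne₂
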